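/- Let P ∈ ℂ[x] satisfy P(x) = P̄(−x). Then the following are equivalent: (i) there exist R₁, R₂, S ∈ ℂ[x] with (R₁, R₂) ≠ (0, 0) and Re₀S = 0 such that R̄₁(−x)·R₁(x) − Re₀(R̄₂(1−x)·R₂(x−1)·P(x−1)) = Re₀(S(x−1)·P(x−1)); (ii) there exists a nonzero F ∈ ℂ[x] such that Re F(x) ≥ 0 for every x ∈ ℂ with Re x = 0, and Re(F(x−1)·P(x−1)) ≥ 0 for every x ∈ ℂ with Re x = 0. -/
import Mathlib

open Polynomial Filter
open scoped Classical ComplexConjugate Topology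

noncomputable section

/-- `pconj F` is the polynomial `F̄(−x)`, where `F̄` has the conjugate coefficients. -/
def pconj (F : ℂ[X]) : ℂ[X] := (F.map (starRingEnd ℂ)).comp (-X)

/-- `re0 F` is the polynomial `(F(x) + F̄(−x))/2`; it is the unique polynomial agreeing with
`Re (F(x))` on the imaginary axis. -/
def re0 (F : ℂ[X]) : ℂ[X] := (2⁻¹ : ℂ) • (F + pconj F)

lemma eval_map_conj (F : ℂ[X]) (z : ℂ) :
    (F.map (starRingEnd ℂ)).eval z = conj (F.eval (conj z)) := by
  rw [eval_map]
  simpa using eval₂_at_apply (p := F) (starRingEnd ℂ) (conj z)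

lemma pconj_eval (F : ℂ[X]) (z : ℂ) :
    (pconj F).eval z = conj (F.eval (-(conj z))) := by
  simp [pconj, eval_comp, eval_map_conj, map_neg]

lemma neg_conj_of_axis {x : ℂ} (hx : x.re = 0) : -(conj x) = x := by
  apply Complex.ext <;> simp [hx]

lemma pconj_eval_axis (F : ℂ[X]) {x : ℂ} (hx : x.re = 0) :
    (pconj F).eval x = conj (F.eval x) := by
  rw [pconj_eval, neg_conj_of_axis hx]

lemma re0_eval_axis (F : ℂ[X]) {x : ℂ} (hx : x.re = 0) :
    (re0 F).eval x = ((F.eval x).re : ℂ) := by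
  simp only [re0, eval_smul, eval_add, pconj_eval_axis F hx, smul_eq_mul]
  rw [Complex.add_conj]
  push_cast
  ring

lemma axis_infinite : {x : ℂ | x.re = 0}.Infinite := by
  apply Set.infinite_of_injective_forall_mem (f := fun t : ℝ => (t : ℂ) * Complex.I)
  case hi => intro a b hab; simpa [Complex.ext_iff] using hab
  case hf => intro t; simp [Complex.ext_iff]

lemma eq_of_axis {p q : ℂ[X]} (h : ∀ x : ℂ, x.re = 0 → p.eval x = q.eval x) : p = q := by
  apply eq_of_infinite_eval_eq
  apply Set.Infinite.mono _ axis_infinite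
  intro x hx
  exact h x hx

lemma reals_infinite : {x : ℂ | x.im = 0}.Infinite := by
  apply Set.infinite_of_injective_forall_mem (f := fun t : ℝ => (t : ℂ))
  case hi => intro a b hab; simpa [Complex.ext_iff] using hab
  case hf => intro t; simp

lemma eq_of_reals {p q : ℂ[X]} (h : ∀ t : ℝ, p.eval (t : ℂ) = q.eval (t : ℂ)) : p = q := by
  apply eq_of_infinite_eval_eq
  apply Set.Infinite.mono _ reals_infinite
  intro x hx
  have hh : x = ((x.re : ℝ) : ℂ) := by apply Complex.ext <;> simp_all
  rw [hh]; exact h x.re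

lemma pconj_zero : pconj 0 = 0 := by simp [pconj]

lemma pconj_one : pconj 1 = 1 := by simp [pconj]

lemma pconj_add (p q : ℂ[X]) : pconj (p + q) = pconj p + pconj q := by
  simp [pconj, Polynomial.map_add, add_comp]

lemma re0_zero : re0 0 = 0 := by simp [re0, pconj_zero]

lemma re0_add (p q : ℂ[X]) : re0 (p + q) = re0 p + re0 q := by
  simp only [re0, pconj_add]
  rw [← smul_add]
  congr 1
  ring

lemma conj_mul_self (w : ℂ) : conj w * w = ((Complex.normSq w : ℝ) : ℂ) := by
  rw [mul_comm, Complex.mul_conj]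

lemma cont_aux (p : ℂ[X]) : Continuous fun t : ℝ => p.eval (t : ℂ) :=
  p.continuous.comp Complex.continuous_ofReal

lemma fejer_aux : ∀ n : ℕ, ∀ g : ℂ[X], g.natDegree ≤ n →
    (∀ t : ℝ, (g.eval (t : ℂ)).im = 0) → (∀ t : ℝ, 0 ≤ (g.eval (t : ℂ)).re) →
    ∃ h : ℂ[X], ∀ t : ℝ, g.eval (t : ℂ) = conj (h.eval (t : ℂ)) * h.eval (t : ℂ) := by
  intro n
  induction n using Nat.strong_induction_on with
  | _ n ih =>
  intro g hdeg him hre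
  by_cases h0 : g.natDegree = 0
  · -- constant case
    obtain ⟨a, rfl⟩ := natDegree_eq_zero.mp h0
    have ha1 : a.im = 0 := by simpa using him 0
    have ha2 : 0 ≤ a.re := by simpa using hre 0
    refine ⟨C ((Real.sqrt a.re : ℝ) : ℂ), fun t => ?_⟩
    simp only [eval_C, Complex.conj_ofReal]
    rw [← Complex.ofReal_mul, Real.mul_self_sqrt ha2]
    apply Complex.ext <;> simp [ha1]
  · have hg0 : g ≠ 0 := fun h => h0 (by simp [h])
    have hdpos : 0 < g.degree := natDegree_pos_iff_degree_pos.mp (Nat.pos_of_ne_zero h0)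
    obtain ⟨z, hz⟩ := Complex.exists_root hdpos
    have hgc : g.map (starRingEnd ℂ) = g := by
      apply eq_of_reals
      intro t
      have h1 : (g.map (starRingEnd ℂ)).eval (t:ℂ) = conj (g.eval (conj (t:ℂ))) := by
        rw [eval_map]
        simpa using eval₂_at_apply (p := g) (starRingEnd ℂ) (conj (t:ℂ))
      rw [h1, Complex.conj_ofReal]
      exact Complex.conj_eq_iff_im.mpr (him t)
    have hconj : ∀ w : ℂ, g.eval (conj w) = conj (g.eval w) := by
      intro w
      conv_lhs => rw [← hgc]
      rw [eval_map]
      have := eval₂_at_apply (p := g) (starRingEnd ℂ) w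
      simpa using this
    by_cases hzim : z.im = 0
    · -- real root
      set r : ℝ := z.re with hr
      have hzr : z = (r : ℂ) := by apply Complex.ext <;> simp [hzim, hr]
      obtain ⟨u, hgu, hnd⟩ := g.exists_eq_pow_rootMultiplicity_mul_and_not_dvd hg0 z
      set m := g.rootMultiplicity z with hmdef
      have hm1 : 0 < m := (rootMultiplicity_pos hg0).mpr hz
      have huz : u.eval z ≠ 0 := fun h => hnd (dvd_iff_isRoot.mpr h)
      -- values of g on reals
      have hval : ∀ t : ℝ, g.eval (t:ℂ) = (((t - r) ^ m : ℝ) : ℂ) * u.eval (t:ℂ) := by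
        intro t
        rw [hgu, eval_mul, eval_pow, eval_sub, eval_X, eval_C, hzr]
        push_cast
        ring
      have huim : ∀ t : ℝ, t ≠ r → (u.eval (t:ℂ)).im = 0 := by
        intro t ht
        have h1 := him t
        rw [hval t, Complex.im_ofReal_mul] at h1
        have h2 : (t - r) ^ m ≠ 0 := pow_ne_zero _ (sub_ne_zero_of_ne ht)
        exact (mul_eq_zero.mp h1).resolve_left h2
      -- m is even
      have hmeven : Even m := by
        by_contra hodd
        rw [Nat.not_even_iff_odd] at hodd
        have huimr : (u.eval (r:ℂ)).im = 0 := by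
          have hd : Dense ({r}ᶜ : Set ℝ) := dense_compl_singleton r
          have hc1 : Continuous fun t : ℝ => (u.eval (t:ℂ)).im :=
            Complex.continuous_im.comp (cont_aux u)
          have := Continuous.ext_on hd hc1 continuous_const
            (fun t ht => huim t (by simpa using ht))
          exact congrFun this r
        have hur : (u.eval (r:ℂ)).re ≠ 0 := by
          intro h
          apply huz
          rw [hzr]
          apply Complex.ext <;> simp [h, huimr]
        have hcre : Continuous fun t : ℝ => (u.eval (t:ℂ)).re :=
          Complex.continuous_re.comp (cont_aux u)
        rcases lt_or_gt_of_ne hur with hneg | hpos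
        · -- u(r).re < 0 : take t > r
          have hev : ∀ᶠ t : ℝ in 𝓝[>] r, (u.eval (t:ℂ)).re < 0 := by
            apply eventually_nhdsWithin_of_eventually_nhds
            exact (hcre.continuousAt).eventually_lt continuousAt_const hneg
          have hev2 : ∀ᶠ t : ℝ in 𝓝[>] r, r < t := eventually_mem_nhdsWithin
          obtain ⟨t, ht1, ht2⟩ := (hev.and hev2).exists
          have : (g.eval (t:ℂ)).re < 0 := by
            rw [hval t, Complex.re_ofReal_mul]
            exact mul_neg_of_pos_of_neg (pow_pos (by linarith) m) ht1
          exact absurd (hre t) (not_le.mpr this)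
        · -- u(r).re > 0 : take t < r
          have hev : ∀ᶠ t : ℝ in 𝓝[<] r, 0 < (u.eval (t:ℂ)).re := by
            apply eventually_nhdsWithin_of_eventually_nhds
            exact ContinuousAt.eventually_lt continuousAt_const hcre.continuousAt hpos
          have hev2 : ∀ᶠ t : ℝ in 𝓝[<] r, t < r := eventually_mem_nhdsWithin
          obtain ⟨t, ht1, ht2⟩ := (hev.and hev2).exists
          have : (g.eval (t:ℂ)).re < 0 := by
            rw [hval t, Complex.re_ofReal_mul]
            exact mul_neg_of_neg_of_pos (Odd.pow_neg hodd (by linarith)) ht1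
          exact absurd (hre t) (not_le.mpr this)
      have hm2 : 2 ≤ m := Nat.le_of_dvd hm1 hmeven.two_dvd
      have hdvd2 : (X - C z) ^ 2 ∣ g := dvd_trans (pow_dvd_pow _ hm2) ⟨u, hgu⟩
      obtain ⟨g₁, hg1⟩ := hdvd2
      have hg₁0 : g₁ ≠ 0 := by
        intro h; apply hg0; rw [hg1, h, mul_zero]
      have hval1 : ∀ t : ℝ, g.eval (↑t : ℂ) = (((t - r) ^ 2 : ℝ) : ℂ) * g₁.eval (↑t : ℂ) := by
        intro t
        rw [hg1, eval_mul, eval_pow, eval_sub, eval_X, eval_C, hzr]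
        push_cast
        ring
      have him1' : ∀ t : ℝ, t ≠ r → (g₁.eval (↑t : ℂ)).im = 0 := by
        intro t ht
        have h1 := him t
        rw [hval1 t, Complex.im_ofReal_mul] at h1
        have h2 : (t - r) ^ 2 ≠ 0 := pow_ne_zero _ (sub_ne_zero_of_ne ht)
        exact (mul_eq_zero.mp h1).resolve_left h2
      have him1 : ∀ t : ℝ, (g₁.eval (↑t : ℂ)).im = 0 := by
        have hd : Dense ({r}ᶜ : Set ℝ) := dense_compl_singleton r
        have hc1 : Continuous fun t : ℝ => (g₁.eval (↑t : ℂ)).im :=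
          Complex.continuous_im.comp (cont_aux g₁)
        have := Continuous.ext_on hd hc1 continuous_const
          (fun t ht => him1' t (by simpa using ht))
        exact fun t => congrFun this t
      have hre1' : ∀ t : ℝ, t ≠ r → 0 ≤ (g₁.eval (↑t : ℂ)).re := by
        intro t ht
        have h1 := hre t
        rw [hval1 t, Complex.re_ofReal_mul] at h1
        have h2 : (0:ℝ) < (t - r) ^ 2 := pow_two_pos_of_ne_zero (sub_ne_zero_of_ne ht)
        nlinarith
      have hre1 : ∀ t : ℝ, 0 ≤ (g₁.eval (↑t : ℂ)).re := by
        intro t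
        rcases eq_or_ne t r with heq | ht
        · subst heq
          have hc1 : Continuous fun s : ℝ => (g₁.eval (↑s : ℂ)).re :=
            Complex.continuous_re.comp (cont_aux g₁)
          have htend : Tendsto (fun s : ℝ => (g₁.eval (↑s : ℂ)).re) (𝓝[≠] r)
              (𝓝 ((g₁.eval (↑r : ℂ)).re)) :=
            (hc1.continuousAt).continuousWithinAt
          refine ge_of_tendsto htend ?_
          filter_upwards [eventually_mem_nhdsWithin] with s hs
          exact hre1' s hs
        · exact hre1' t ht
      have hdeg1 : g₁.natDegree < n := by
        have h2 : ((X - C z) ^ 2).natDegree = 2 := by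
          rw [natDegree_pow, natDegree_X_sub_C]
        have hX2 : ((X : ℂ[X]) - C z) ^ 2 ≠ 0 := pow_ne_zero _ (X_sub_C_ne_zero z)
        have := natDegree_mul hX2 hg₁0
        rw [← hg1, h2] at this
        omega
      obtain ⟨h₁, hh₁⟩ := ih _ hdeg1 g₁ le_rfl him1 hre1
      refine ⟨(X - C z) * h₁, fun t => ?_⟩
      have hcz : conj z = z := Complex.conj_eq_iff_im.mpr hzim
      rw [hval1 t]
      simp only [eval_mul, eval_sub, eval_X, eval_C, map_mul, map_sub, Complex.conj_ofReal, hcz]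
      rw [hh₁ t, hzr]
      push_cast
      ring
    · -- nonreal root
      have hz2 : g.eval (conj z) = 0 := by
        rw [hconj z, hz, map_zero]
      have hne : z ≠ conj z := by
        intro h
        apply hzim
        have := congrArg Complex.im h
        simp only [Complex.conj_im] at this
        linarith
      have hcop : IsCoprime ((X : ℂ[X]) - C z) (X - C (conj z)) :=
        isCoprime_X_sub_C_of_isUnit_sub ((sub_ne_zero_of_ne hne).isUnit)
      have hdvd : ((X : ℂ[X]) - C z) * (X - C (conj z)) ∣ g :=
        hcop.mul_dvd (dvd_iff_isRoot.mpr hz) (dvd_iff_isRoot.mpr hz2)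
      obtain ⟨g₁, hg1⟩ := hdvd
      have hg₁0 : g₁ ≠ 0 := by
        intro h; apply hg0; rw [hg1, h, mul_zero]
      have hval1 : ∀ t : ℝ, g.eval (↑t : ℂ) =
          ((Complex.normSq ((↑t : ℂ) - z) : ℝ) : ℂ) * g₁.eval (↑t : ℂ) := by
        intro t
        rw [hg1, eval_mul, eval_mul, eval_sub, eval_sub, eval_X, eval_C, eval_C]
        congr 1
        rw [← Complex.mul_conj, map_sub, Complex.conj_ofReal]
      have hpos : ∀ t : ℝ, 0 < Complex.normSq ((↑t : ℂ) - z) := by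
        intro t
        apply Complex.normSq_pos.mpr
        intro h
        apply hzim
        have := congrArg Complex.im h
        simpa using this.symm
      have him1 : ∀ t : ℝ, (g₁.eval (↑t : ℂ)).im = 0 := by
        intro t
        have h1 := him t
        rw [hval1 t, Complex.im_ofReal_mul] at h1
        exact (mul_eq_zero.mp h1).resolve_left (hpos t).ne'
      have hre1 : ∀ t : ℝ, 0 ≤ (g₁.eval (↑t : ℂ)).re := by
        intro t
        have h1 := hre t
        rw [hval1 t, Complex.re_ofReal_mul] at h1
        nlinarith [hpos t]
      have hdeg1 : g₁.natDegree < n := by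
        have hX1 : ((X : ℂ[X]) - C z) ≠ 0 := X_sub_C_ne_zero z
        have hX2 : ((X : ℂ[X]) - C (conj z)) ≠ 0 := X_sub_C_ne_zero _
        have hm : ((X : ℂ[X]) - C z) * (X - C (conj z)) ≠ 0 := mul_ne_zero hX1 hX2
        have h1 := natDegree_mul hm hg₁0
        have h2 := natDegree_mul hX1 hX2
        rw [← hg1] at h1
        rw [natDegree_X_sub_C, natDegree_X_sub_C] at h2
        omega
      obtain ⟨h₁, hh₁⟩ := ih _ hdeg1 g₁ le_rfl him1 hre1
      refine ⟨(X - C z) * h₁, fun t => ?_⟩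
      rw [hval1 t]
      simp only [eval_mul, eval_sub, eval_X, eval_C, map_mul, map_sub, Complex.conj_ofReal]
      rw [hh₁ t, ← Complex.mul_conj, map_sub, Complex.conj_ofReal]
      ring

lemma factor_axis (Q : ℂ[X])
    (him : ∀ x : ℂ, x.re = 0 → (Q.eval x).im = 0)
    (hre : ∀ x : ℂ, x.re = 0 → 0 ≤ (Q.eval x).re) :
    ∃ R : ℂ[X], Q = pconj R * R := by
  have haxis : ∀ t : ℝ, (Complex.I * (t : ℂ)).re = 0 := by intro t; simp
  have hgeval : ∀ t : ℝ, (Q.comp (C Complex.I * X)).eval (t : ℂ) = Q.eval (Complex.I * t) := by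
    intro t; simp [eval_comp]
  obtain ⟨h, hh⟩ := fejer_aux (Q.comp (C Complex.I * X)).natDegree (Q.comp (C Complex.I * X))
    le_rfl
    (fun t => by rw [hgeval]; exact him _ (haxis t))
    (fun t => by rw [hgeval]; exact hre _ (haxis t))
  refine ⟨h.comp (C (-Complex.I) * X), ?_⟩
  apply eq_of_axis
  intro x hx
  have hxI : x = Complex.I * ((x.im : ℝ) : ℂ) := by apply Complex.ext <;> simp [hx]
  have h2 : (-Complex.I) * x = ((x.im : ℝ) : ℂ) := by apply Complex.ext <;> simp [hx]
  have hRx : (h.comp (C (-Complex.I) * X)).eval x = h.eval ((x.im : ℝ) : ℂ) := by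
    rw [eval_comp, eval_mul, eval_C, eval_X, h2]
  rw [eval_mul, pconj_eval_axis _ hx, hRx]
  rw [← hh x.im, hgeval x.im, ← hxI]

theorem stmt7 (P : ℂ[X]) (hP : pconj P = P) :
    (∃ R₁ R₂ S : ℂ[X], (R₁ ≠ 0 ∨ R₂ ≠ 0) ∧ re0 S = 0 ∧
      pconj R₁ * R₁ - re0 ((pconj R₂ * R₂ * P).comp (X - 1)) =
        re0 ((S * P).comp (X - 1))) ↔
    (∃ F : ℂ[X], F ≠ 0 ∧ (∀ x : ℂ, x.re = 0 → 0 ≤ (F.eval x).re) ∧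
      (∀ x : ℂ, x.re = 0 → 0 ≤ (F.eval (x - 1) * P.eval (x - 1)).re)) := by
  have evalX1 : ∀ (p : ℂ[X]) (x : ℂ), (p.comp (X - 1)).eval x = p.eval (x - 1) := by
    intro p x; simp [eval_comp]
  constructor
  · rintro ⟨R₁, R₂, S, hne, hS, heq⟩
    have hSre : ∀ x : ℂ, x.re = 0 → (S.eval x).re = 0 := by
      intro x hx
      have h1 : (re0 S).eval x = 0 := by rw [hS, eval_zero]
      rw [re0_eval_axis S hx] at h1
      exact_mod_cast h1
    refine ⟨pconj R₂ * R₂ + S, ?_, ?_, ?_⟩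
    · -- F ≠ 0
      intro hF0
      have hR₂ : R₂ = 0 := by
        apply eq_of_axis
        intro x hx
        have h1 : (pconj R₂ * R₂ + S).eval x = 0 := by rw [hF0, eval_zero]
        rw [eval_add, eval_mul, pconj_eval_axis R₂ hx, conj_mul_self] at h1
        have h2 := congrArg Complex.re h1
        simp only [Complex.add_re, Complex.ofReal_re, Complex.zero_re, hSre x hx,
          add_zero] at h2
        rw [eval_zero]
        exact Complex.normSq_eq_zero.mp h2
      have hS0 : S = 0 := by
        have := hF0
        rw [hR₂, pconj_zero, zero_mul, zero_add] at this
        exact this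
      have hR₁ : R₁ = 0 := by
        apply eq_of_axis
        intro x hx
        have h1 := congrArg (fun p : ℂ[X] => p.eval x) heq
        simp only [hR₂, hS0, pconj_zero, zero_mul, mul_zero] at h1
        rw [zero_comp, re0_zero] at h1
        simp only [eval_sub, eval_mul, eval_zero, sub_zero] at h1
        rw [pconj_eval_axis R₁ hx, conj_mul_self] at h1
        rw [eval_zero]
        exact_mod_cast Complex.normSq_eq_zero.mp (by exact_mod_cast h1)
      rcases hne with h | h
      · exact h hR₁
      · exact h hR₂
    · -- Re F ≥ 0 on axis
      intro x hx
      rw [eval_add, eval_mul, pconj_eval_axis R₂ hx, conj_mul_self]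
      simp only [Complex.add_re, Complex.ofReal_re, hSre x hx, add_zero]
      exact Complex.normSq_nonneg _
    · -- second inequality
      intro x hx
      have h1 := congrArg (fun p : ℂ[X] => p.eval x) heq
      simp only [eval_sub, eval_mul] at h1
      rw [pconj_eval_axis R₁ hx, conj_mul_self, re0_eval_axis _ hx, re0_eval_axis _ hx] at h1
      have h2 := congrArg Complex.re h1
      simp only [Complex.sub_re, Complex.ofReal_re] at h2
      have h3 : ((pconj R₂ * R₂ + S).eval (x - 1) * P.eval (x - 1)) =
          ((pconj R₂ * R₂ * P).comp (X - 1)).eval x + ((S * P).comp (X - 1)).eval x := by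
        rw [evalX1, evalX1]
        simp only [eval_mul, eval_add]
        ring
      rw [h3]
      simp only [Complex.add_re]
      linarith [Complex.normSq_nonneg (R₁.eval x)]
  · rintro ⟨F, hF0, h1, h2⟩
    by_cases hdeg : re0 F = 0 ∧ re0 ((F * P).comp (X - 1)) = 0
    · -- degenerate case
      obtain ⟨hd1, hd2⟩ := hdeg
      have htwo : (2⁻¹ : ℂ) ≠ 0 := by norm_num
      have hpF : pconj F = -F := by
        have h := (smul_eq_zero.mp hd1).resolve_left htwo
        exact eq_neg_of_add_eq_zero_right h
      have hpG : pconj ((F * P).comp (X - 1)) = -((F * P).comp (X - 1)) := by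
        have h := (smul_eq_zero.mp hd2).resolve_left htwo
        exact eq_neg_of_add_eq_zero_right h
      have hFall : ∀ z : ℂ, F.eval (-(conj z)) = -conj (F.eval z) := by
        intro z
        have h := congrArg (fun p : ℂ[X] => p.eval z) hpF
        simp only [eval_neg] at h
        rw [pconj_eval] at h
        have h' := congrArg conj h
        simpa using h'
      have hPall : ∀ z : ℂ, P.eval (-(conj z)) = conj (P.eval z) := by
        intro z
        have h := congrArg (fun p : ℂ[X] => p.eval z) hP
        simp only [pconj_eval] at h
        have h' := congrArg conj h
        simpa using h'
      have hN1 : ∀ z : ℂ, (F * P).eval (-(conj z)) = -conj ((F * P).eval z) := by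
        intro z
        rw [eval_mul, eval_mul, hFall z, hPall z, map_mul]
        ring
      have hN2 : ∀ w : ℂ, (F * P).eval (w + 2) = (F * P).eval w := by
        intro w
        have hG := congrArg (fun p : ℂ[X] => p.eval (w + 1)) hpG
        simp only [eval_neg] at hG
        rw [pconj_eval, evalX1, evalX1] at hG
        have e1 : -(conj (w + 1)) - 1 = -(conj (w + 2)) := by
          rw [map_add, map_add, map_one]
          have : (starRingEnd ℂ) 2 = 2 := by
            rw [Complex.conj_eq_iff_im]
            norm_num
          rw [this]
          ring
        rw [e1, hN1 (w + 2)] at hG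
        simp only [map_neg, Complex.conj_conj] at hG
        have e2 : w + 1 - 1 = w := by ring
        rw [e2] at hG
        exact neg_inj.mp hG
      have hkey : ∀ k : ℕ, (F * P).eval ((2 * k : ℕ) : ℂ) = (F * P).eval 0 := by
        intro k
        induction k with
        | zero => norm_num
        | succ k ihk =>
          have e3 : (((2 * (k + 1) : ℕ)) : ℂ) = ((2 * k : ℕ) : ℂ) + 2 := by
            push_cast; ring
          rw [e3, hN2, ihk]
      have hNconst : F * P = C ((F * P).eval 0) := by
        apply eq_of_infinite_eval_eq
        apply Set.Infinite.mono _
          (Set.infinite_range_of_injective (f := fun k : ℕ => ((2 * k : ℕ) : ℂ)) ?_)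
        · rintro _ ⟨k, rfl⟩
          simp only [Set.mem_setOf_eq, eval_C]
          exact hkey k
        · intro a b hab
          simp only at hab
          have : (2 * a : ℕ) = (2 * b : ℕ) := Nat.cast_injective hab
          omega
      by_cases hPz : P = 0
      · refine ⟨0, 1, 0, Or.inr one_ne_zero, re0_zero, ?_⟩
        rw [hPz]
        simp [pconj_zero, pconj_one, re0_zero]
      · have hc0 : (F * P).eval 0 ≠ 0 := by
          intro h
          have hN0 : F * P = 0 := by rw [hNconst, h, map_zero]
          rcases mul_eq_zero.mp hN0 with h' | h'
          exacts [hF0 h', hPz h']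
        have hdegs : P.natDegree = 0 := by
          have hd := natDegree_mul hF0 hPz
          rw [hNconst, natDegree_C] at hd
          omega
        obtain ⟨p, hp⟩ := natDegree_eq_zero.mp hdegs
        have hp0 : p ≠ 0 := fun h => hPz (by rw [← hp, h, C_0])
        have hpim : p.im = 0 := by
          have h := congrArg (fun q : ℂ[X] => q.eval 0) hP
          simp only [pconj_eval, ← hp, eval_C] at h
          exact Complex.conj_eq_iff_im.mp h
        refine ⟨1, 0, C (-p⁻¹) * X, Or.inl one_ne_zero, ?_, ?_⟩
        · apply eq_of_axis
          intro x hx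
          rw [re0_eval_axis _ hx, eval_zero]
          rw [eval_mul, eval_C, eval_X]
          rw [Complex.ofReal_eq_zero, Complex.mul_re]
          simp [hx, Complex.inv_im, hpim]
        · apply eq_of_axis
          intro x hx
          have hL : pconj 0 * 0 * P = (0 : ℂ[X]) := by rw [mul_zero, zero_mul]
          rw [hL, zero_comp, re0_zero, sub_zero]
          rw [eval_mul, pconj_eval_axis _ hx, eval_one, map_one, one_mul]
          rw [re0_eval_axis _ hx, evalX1]
          rw [← hp]
          rw [eval_mul, eval_mul, eval_C, eval_C, eval_X]
          have e4 : -p⁻¹ * (x - 1) * p = -(x - 1) := by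
            field_simp
          rw [e4]
          have e5 : (-(x - 1)).re = 1 := by
            simp [hx]
          rw [e5]
          norm_num
    · -- main case
      have himA : ∀ x : ℂ, x.re = 0 → ((re0 F).eval x).im = 0 := by
        intro x hx; rw [re0_eval_axis F hx]; simp
      have hreA : ∀ x : ℂ, x.re = 0 → 0 ≤ ((re0 F).eval x).re := by
        intro x hx; rw [re0_eval_axis F hx]; simpa using h1 x hx
      obtain ⟨R₂, hR₂⟩ := factor_axis (re0 F) himA hreA
      have himB : ∀ x : ℂ, x.re = 0 → ((re0 ((F * P).comp (X - 1))).eval x).im = 0 := by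
        intro x hx; rw [re0_eval_axis _ hx]; simp
      have hreB : ∀ x : ℂ, x.re = 0 → 0 ≤ ((re0 ((F * P).comp (X - 1))).eval x).re := by
        intro x hx
        rw [re0_eval_axis _ hx]
        simp only [Complex.ofReal_re]
        rw [evalX1, eval_mul]
        exact h2 x hx
      obtain ⟨R₁, hR₁⟩ := factor_axis (re0 ((F * P).comp (X - 1))) himB hreB
      refine ⟨R₁, R₂, F - re0 F, ?_, ?_, ?_⟩
      · rcases not_and_or.mp hdeg with h | h
        · right; intro hR; apply h; rw [hR₂, hR, pconj_zero, zero_mul]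
        · left; intro hR; apply h; rw [hR₁, hR, pconj_zero, zero_mul]
      · apply eq_of_axis
        intro x hx
        rw [re0_eval_axis _ hx, eval_zero, eval_sub, re0_eval_axis F hx]
        simp
      · have hsum : (pconj R₂ * R₂ * P).comp (X - 1) + ((F - re0 F) * P).comp (X - 1) =
            (F * P).comp (X - 1) := by
          rw [← hR₂, ← add_comp, ← add_mul]
          congr 1
          ring
        rw [sub_eq_iff_eq_add, ← re0_add, add_comm (((F - re0 F) * P).comp (X - 1)), hsum, ← hR₁]
end
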